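/- arXiv:1906.00766 — 8 statements merged into one kernel-verified Lean document; each statement's English description precedes it below -/
import Mathlib

section
/- If a monitor m in a monitoring system is sound and complete (both satisfaction-complete and violation-complete) for a property P over finfinite traces, then P is either the set of all finfinite traces or the empty set. -/
/-- Finfinite traces over an alphabet `Act`: finite lists or infinite sequences. -/
inductive Trace (Act : Type) : Type where
  | fin : List Act → Trace Act
  | inf : (ℕ → Act) → Trace Act

/-- Concatenation of a finite trace with a finfinite trace. -/
def Trace.cat {Act : Type} (t : List Act) : Trace Act → Trace Act
  | .fin s => .fin (t ++ s)
  | .inf f => .inf (fun n => if h : n < t.length then t.get ⟨n, h⟩ else f (n - t.length))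

/-- A finite trace positively determines `P`: every finfinite extension is in `P`. -/
def PosDet {Act : Type} (P : Set (Trace Act)) (t : List Act) : Prop :=
  ∀ u : Trace Act, Trace.cat t u ∈ P

/-- A finite trace negatively determines `P`: every finfinite extension is not in `P`. -/
def NegDet {Act : Type} (P : Set (Trace Act)) (t : List Act) : Prop :=
  ∀ u : Trace Act, Trace.cat t u ∉ P

/-- A monitoring system: monitors with acceptance/rejection relations satisfying
finite-prefix witnessing and verdict persistence. -/
structure MonSys (Act : Type) where
  M : Type
  acc : M → Trace Act → Prop
  rej : M → Trace Act → Prop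
  acc_prefix : ∀ m u, acc m u → ∃ t : List Act, (∃ v, Trace.cat t v = u) ∧ acc m (Trace.fin t)
  rej_prefix : ∀ m u, rej m u → ∃ t : List Act, (∃ v, Trace.cat t v = u) ∧ rej m (Trace.fin t)
  acc_persist : ∀ m (t : List Act) (u : Trace Act), acc m (Trace.fin t) → acc m (Trace.cat t u)
  rej_persist : ∀ m (t : List Act) (u : Trace Act), rej m (Trace.fin t) → rej m (Trace.cat t u)

/-- Soundness of a monitor for a property. -/
def Sound {Act : Type} (S : MonSys Act) (m : S.M) (P : Set (Trace Act)) : Prop :=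
  (∀ u, S.acc m u → u ∈ P) ∧ (∀ u, S.rej m u → u ∉ P)

/-- The canonical (maximal) monitor for `P`: it accepts exactly the traces with a prefix
positively determining `P`, and rejects exactly those with a prefix negatively determining `P`. -/
def Canonical {Act : Type} (S : MonSys Act) (m : S.M) (P : Set (Trace Act)) : Prop :=
  (∀ u, S.acc m u ↔ ∃ t : List Act, (∃ v, Trace.cat t v = u) ∧ PosDet P t) ∧
  (∀ u, S.rej m u ↔ ∃ t : List Act, (∃ v, Trace.cat t v = u) ∧ NegDet P t)

/-- Safety: every violating trace has a finite prefix negatively determining `P`. -/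
def Safety {Act : Type} (P : Set (Trace Act)) : Prop :=
  ∀ u, u ∉ P → ∃ t : List Act, (∃ v, Trace.cat t v = u) ∧ NegDet P t

/-- Co-safety: every satisfying trace has a finite prefix positively determining `P`. -/
def CoSafety {Act : Type} (P : Set (Trace Act)) : Prop :=
  ∀ u, u ∈ P → ∃ t : List Act, (∃ v, Trace.cat t v = u) ∧ PosDet P t

/-- Universal Pnueli–Zaks monitorability. -/
def UPZ {Act : Type} (P : Set (Trace Act)) : Prop :=
  ∀ t : List Act, ∃ t' : List Act, PosDet P (t ++ t') ∨ NegDet P (t ++ t')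

/-- Existential Pnueli–Zaks monitorability. -/
def EPZ {Act : Type} (P : Set (Trace Act)) : Prop :=
  ∃ t : List Act, PosDet P t ∨ NegDet P t

theorem cat_nil {Act : Type} (u : Trace Act) : Trace.cat [] u = u := by
  cases u with
  | fin s => simp [Trace.cat]
  | inf f => simp [Trace.cat]

theorem sound_complete_trivial {Act : Type} (S : MonSys Act) (m : S.M)
    (P : Set (Trace Act)) (hsound : Sound S m P)
    (hsat : ∀ u, u ∈ P → S.acc m u) (hviol : ∀ u, u ∉ P → S.rej m u) :
    P = Set.univ ∨ P = ∅ := by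
  by_cases h : Trace.fin ([] : List Act) ∈ P
  · left
    ext u
    simp only [Set.mem_univ, iff_true]
    have := S.acc_persist m [] u (hsat _ h)
    rw [cat_nil] at this
    exact hsound.1 u this
  · right
    ext u
    simp only [Set.mem_empty_iff_false, iff_false]
    have := S.rej_persist m [] u (hviol _ h)
    rw [cat_nil] at this
    exact hsound.2 u this
end

section
/- In a maximal monitoring system, if m is any sound monitor for P and m accepts (respectively rejects) a trace u, then the canonical monitor m_P also accepts (respectively rejects) u. -/
theorem canonical_subsumes_sound {Act : Type} (S : MonSys Act) (m mP : S.M)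
    (P : Set (Trace Act)) (hc : Canonical S mP P) (hs : Sound S m P) :
    ∀ u : Trace Act, (S.acc m u → S.acc mP u) ∧ (S.rej m u → S.rej mP u) := by
  intro u
  constructor
  · intro h
    obtain ⟨t, hpre, hacc⟩ := S.acc_prefix m u h
    exact (hc.1 u).mpr ⟨t, hpre, fun v => hs.1 _ (S.acc_persist m t v hacc)⟩
  · intro h
    obtain ⟨t, hpre, hrej⟩ := S.rej_prefix m u h
    exact (hc.2 u).mpr ⟨t, hpre, fun v => hs.2 _ (S.rej_persist m t v hrej)⟩
end

section
/- The property over the alphabet {s, f, r} consisting of all finfinite traces in which the action r occurs only finitely often is not informatively monitorable: there is no sound monitor for it (in any monitoring system) that accepts or rejects at least one trace. -/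
/-- over Act = Fin 3 with s = 0, f = 1, r = 2, the property
"r occurs only finitely often" has no sound informative monitor. -/
theorem finitely_many_r_not_informative
    (S : MonSys (Fin 3)) (m : S.M)
    (hsound : Sound S m
      {u : Trace (Fin 3) | ∀ g : ℕ → Fin 3, u = Trace.inf g → {n : ℕ | g n = 2}.Finite}) :
    ¬ ∃ u : Trace (Fin 3), S.acc m u ∨ S.rej m u := by
  rintro ⟨u, hacc | hrej⟩
  · obtain ⟨t, _, hat⟩ := S.acc_prefix m u hacc
    have hacc' := S.acc_persist m t (Trace.inf (fun _ => 2)) hat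
    have hmem := hsound.1 _ hacc'
    have := hmem (fun n => if h : n < t.length then t.get ⟨n, h⟩ else 2) rfl
    have hsub : {n : ℕ | t.length ≤ n} ⊆
        {n : ℕ | (if h : n < t.length then t.get ⟨n, h⟩ else (2 : Fin 3)) = 2} := by
      intro n hn
      simp only [Set.mem_setOf_eq] at hn ⊢
      rw [dif_neg (by omega)]
    exact Set.Ici_infinite t.length (this.subset hsub)
  · obtain ⟨t, _, hrt⟩ := S.rej_prefix m u hrej
    have hrej' := S.rej_persist m t (Trace.fin []) hrt
    exact hsound.2 _ hrej' (by intro g hg; simp [Trace.cat] at hg)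
end

section
/- A property P over finfinite traces is a safety property if and only if the canonical monitor m_P in a maximal monitoring system is sound and violation-complete for P. -/
theorem safety_iff_sound_violationComplete {Act : Type} (S : MonSys Act)
    (mP : S.M) (P : Set (Trace Act)) (hc : Canonical S mP P) :
    Safety P ↔ (Sound S mP P ∧ ∀ u, u ∉ P → S.rej mP u) := by
  constructor
  · intro hs
    refine ⟨⟨?_, ?_⟩, ?_⟩
    · intro u hu
      obtain ⟨t, ⟨v, hv⟩, hp⟩ := (hc.1 u).mp hu
      rw [← hv]; exact hp v
    · intro u hu
      obtain ⟨t, ⟨v, hv⟩, hn⟩ := (hc.2 u).mp hu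
      rw [← hv]; exact fun h => hn v h
    · intro u hu
      exact (hc.2 u).mpr (hs u hu)
  · rintro ⟨-, hvc⟩ u hu
    exact (hc.2 u).mp (hvc u hu)
end

section
/- A property P over finfinite traces is a co-safety property if and only if the canonical monitor m_P in a maximal monitoring system is sound and satisfaction-complete for P. -/
theorem cosafety_iff_sound_satisfactionComplete {Act : Type} (S : MonSys Act)
    (mP : S.M) (P : Set (Trace Act)) (hc : Canonical S mP P) :
    CoSafety P ↔ (Sound S mP P ∧ ∀ u, u ∈ P → S.acc mP u) := by
  obtain ⟨hacc, hrej⟩ := hc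
  constructor
  · intro hco
    refine ⟨⟨?_, ?_⟩, ?_⟩
    · intro u hu
      obtain ⟨t, ⟨v, hv⟩, hpd⟩ := (hacc u).1 hu
      exact hv ▸ hpd v
    · intro u hu hp
      obtain ⟨t, ⟨v, hv⟩, hnd⟩ := (hrej u).1 hu
      exact hnd v (hv ▸ hp)
    · intro u hu
      exact (hacc u).2 (hco u hu)
  · rintro ⟨-, hcomp⟩ u hu
    exact (hacc u).1 (hcomp u hu)
end

section
/- Every universally Pnueli–Zaks monitorable property is existentially Pnueli–Zaks monitorable, but the converse fails: over the alphabet {s, f, r}, the property 'either s occurs before any f, or r occurs infinitely often' is existentially but not universally PZ-monitorable. -/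
theorem UPZ.epz {Act : Type} {P : Set (Trace Act)} (h : UPZ P) : EPZ P :=
  (h []).imp fun _ ht => by simpa using ht

section Witness

variable {Act : Type} (s f r : Act)

def sBeforeFOrInfOftenR : Set (Trace Act) :=
  {u | (∃ w : List Act, f ∉ w ∧ ∃ v, Trace.cat (w ++ [s]) v = u) ∨
    (∃ g : ℕ → Act, u = Trace.inf g ∧ ∀ n, ∃ k, n ≤ k ∧ g k = r)}

theorem posDet_sBeforeFOrInfOftenR_singleton : PosDet (sBeforeFOrInfOftenR s f r) [s] :=
  fun u => Or.inl ⟨[], List.not_mem_nil, u, rfl⟩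

theorem epz_sBeforeFOrInfOftenR : EPZ (sBeforeFOrInfOftenR s f r) :=
  ⟨[s], Or.inl (posDet_sBeforeFOrInfOftenR_singleton s f r)⟩

/-- Every prefix can still be completed to an infinite trace with infinitely many `r`. -/
theorem not_negDet_sBeforeFOrInfOftenR (t : List Act) : ¬ NegDet (sBeforeFOrInfOftenR s f r) t :=
  fun h => h (.inf fun _ => r) <| Or.inr
    ⟨_, rfl, fun n => ⟨max n t.length, le_max_left _ _,
      dif_neg (not_lt.mpr (le_max_right n t.length))⟩⟩

variable {s f}

theorem fin_cons_not_mem_sBeforeFOrInfOftenR (hsf : s ≠ f) (t : List Act) :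
    Trace.fin (f :: t) ∉ sBeforeFOrInfOftenR s f r := by
  rintro (⟨w, hfw, v, hv⟩ | ⟨g, hg, -⟩)
  · cases v with
    | inf _ => cases hv
    | fin l =>
      obtain _ | ⟨a, w⟩ := w
      · exact hsf (List.cons.inj (Trace.fin.inj hv)).1
      · obtain rfl : a = f := (List.cons.inj (Trace.fin.inj hv)).1
        exact hfw List.mem_cons_self
  · cases hg

/-- Once `f` has occurred before any `s`, only infinitely many `r` can satisfy the property,
so no finite extension determines it either way. -/
theorem not_upz_sBeforeFOrInfOftenR (hsf : s ≠ f) : ¬ UPZ (sBeforeFOrInfOftenR s f r) := by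
  intro h
  obtain ⟨t, hpos | hneg⟩ := h [f]
  · exact fin_cons_not_mem_sBeforeFOrInfOftenR r hsf t (by simpa [Trace.cat] using hpos (.fin []))
  · exact not_negDet_sBeforeFOrInfOftenR s f r _ hneg

end Witness

/-- uPZ implies ePZ, but the converse fails: over Act = Fin 3
with s = 0, f = 1, r = 2, the property "s occurs before any f, or r occurs
infinitely often" is existentially but not universally PZ-monitorable. -/
theorem upz_implies_epz_not_conversely :
    (∀ (Act : Type) (P : Set (Trace Act)), UPZ P → EPZ P) ∧
    (EPZ {u : Trace (Fin 3) |
        (∃ w : List (Fin 3), (1 : Fin 3) ∉ w ∧ ∃ v, Trace.cat (w ++ [0]) v = u) ∨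
        (∃ g : ℕ → Fin 3, u = Trace.inf g ∧ ∀ n, ∃ k, n ≤ k ∧ g k = 2)} ∧
     ¬ UPZ {u : Trace (Fin 3) |
        (∃ w : List (Fin 3), (1 : Fin 3) ∉ w ∧ ∃ v, Trace.cat (w ++ [0]) v = u) ∨
        (∃ g : ℕ → Fin 3, u = Trace.inf g ∧ ∀ n, ∃ k, n ≤ k ∧ g k = 2)}) :=
  ⟨fun _ _ => UPZ.epz, epz_sBeforeFOrInfOftenR 0 1 2,
    not_upz_sBeforeFOrInfOftenR 2 (by decide)⟩
end

section
/- A property P is universally Pnueli–Zaks monitorable if and only if the canonical monitor m_P of a maximal monitoring system is persistently informative for P (it is automatically sound). -/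
lemma trace_cat_append {Act : Type} (s r : List Act) (u : Trace Act) :
    Trace.cat (s ++ r) u = Trace.cat s (Trace.cat r u) := by
  cases u with
  | fin l => simp [Trace.cat]
  | inf f =>
    simp only [Trace.cat, Trace.inf.injEq]
    funext n
    rcases lt_or_ge n s.length with h | h
    · have h2 : n < (s ++ r).length := by simp; omega
      simp only [h2, dif_pos, h, List.get_eq_getElem]
      rw [List.getElem_append_left h]
    · have hs : ¬ n < s.length := by omega
      rcases lt_or_ge (n - s.length) r.length with h3 | h3
      · have h2 : n < (s ++ r).length := by simp; omega
        simp only [h2, dif_pos, hs, dif_neg, h3, List.get_eq_getElem]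
        rw [List.getElem_append_right (by omega)]
        simp
      · have h2 : ¬ n < (s ++ r).length := by simp; omega
        simp only [h2, dif_neg, hs, dif_neg, h3, List.length_append, not_lt.mpr h3]
        rw [dif_neg (by omega)]
        congr 1
        omega

def IsPref {Act : Type} (s : List Act) : Trace Act → Prop
  | .fin l => s <+: l
  | .inf f => ∀ i : Fin s.length, s.get i = f i

lemma isPref_cat {Act : Type} (s : List Act) (u : Trace Act) :
    IsPref s (Trace.cat s u) := by
  cases u with
  | fin l => exact ⟨l, rfl⟩
  | inf f => intro i; simp [i.isLt]

lemma isPref_comparable {Act : Type} {s t : List Act} {w : Trace Act}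
    (hs : IsPref s w) (ht : IsPref t w) : s <+: t ∨ t <+: s := by
  cases w with
  | fin l => exact List.prefix_or_prefix_of_prefix hs ht
  | inf f =>
    rcases le_total s.length t.length with h | h
    · left
      refine (List.prefix_iff_eq_take.mpr ?_)
      apply List.ext_get (by simp [h])
      intro i h1 h2
      have ht' : t.get ⟨i, by simp at h2; omega⟩ = f i := ht _
      have hs' : s.get ⟨i, h1⟩ = f i := hs _
      simp only [List.get_eq_getElem] at ht' hs'
      simp [List.getElem_take, hs', ht']
    · right
      refine (List.prefix_iff_eq_take.mpr ?_)
      apply List.ext_get (by simp [h])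
      intro i h1 h2
      have hs' : s.get ⟨i, by simp at h2; omega⟩ = f i := hs _
      have ht' : t.get ⟨i, h1⟩ = f i := ht _
      simp only [List.get_eq_getElem] at ht' hs'
      simp [List.getElem_take, hs', ht']

lemma PosDet.append {Act : Type} {P : Set (Trace Act)} {s : List Act}
    (h : PosDet P s) (r : List Act) : PosDet P (s ++ r) := by
  intro u; rw [trace_cat_append]; exact h _

lemma NegDet.append {Act : Type} {P : Set (Trace Act)} {s : List Act}
    (h : NegDet P s) (r : List Act) : NegDet P (s ++ r) := by
  intro u; rw [trace_cat_append]; exact h _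

theorem upz_iff_persistentlyInformative {Act : Type} (S : MonSys Act)
    (mP : S.M) (P : Set (Trace Act)) (hc : Canonical S mP P) :
    UPZ P ↔ ∀ t : List Act, ∃ u : Trace Act,
      S.acc mP (Trace.cat t u) ∨ S.rej mP (Trace.cat t u) := by
  constructor
  · intro h t
    obtain ⟨t', ht'⟩ := h t
    refine ⟨Trace.fin t', ?_⟩
    have hcat : Trace.cat t (Trace.fin t') = Trace.fin (t ++ t') := rfl
    rcases ht' with hp | hn
    · left
      rw [hcat, (hc.1 _)]
      exact ⟨t ++ t', ⟨Trace.fin [], by simp [Trace.cat]⟩, hp⟩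
    · right
      rw [hcat, (hc.2 _)]
      exact ⟨t ++ t', ⟨Trace.fin [], by simp [Trace.cat]⟩, hn⟩
  · intro h t
    obtain ⟨u, hu⟩ := h t
    rcases hu with ha | hr
    · obtain ⟨s, ⟨v, hv⟩, hpos⟩ := (hc.1 _).mp ha
      have hps : IsPref s (Trace.cat t u) := hv ▸ isPref_cat s v
      have hpt : IsPref t (Trace.cat t u) := isPref_cat t u
      rcases isPref_comparable hps hpt with ⟨r, hr⟩ | ⟨r, hr⟩
      · exact ⟨[], Or.inl (by simpa using hr ▸ hpos.append r)⟩
      · exact ⟨r, Or.inl (hr ▸ hpos)⟩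
    · obtain ⟨s, ⟨v, hv⟩, hneg⟩ := (hc.2 _).mp hr
      have hps : IsPref s (Trace.cat t u) := hv ▸ isPref_cat s v
      have hpt : IsPref t (Trace.cat t u) := isPref_cat t u
      rcases isPref_comparable hps hpt with ⟨r, hr⟩ | ⟨r, hr⟩
      · exact ⟨[], Or.inr (by simpa using hr ▸ hneg.append r)⟩
      · exact ⟨r, Or.inr (hr ▸ hneg)⟩
end

section
/- If every finfinite trace satisfying P has a finite prefix that positively determines P, then P equals the extension-closure of the set of minimal finite traces in P, i.e., P = { t·u : t ∈ min(P ∩ Act*), u a finfinite trace }, where min takes the prefix-minimal elements. -/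
lemma Trace.cat_nil {Act : Type} (t : List Act) : Trace.cat t (Trace.fin []) = Trace.fin t := by
  simp [Trace.cat]

lemma Trace.cat_assoc {Act : Type} (s d : List Act) (v : Trace Act) :
    Trace.cat (s ++ d) v = Trace.cat s (Trace.cat d v) := by
  cases v with
  | fin l => simp [Trace.cat]
  | inf f =>
      simp only [Trace.cat]
      congr 1
      funext n
      by_cases h1 : n < s.length
      · rw [dif_pos (by simp; omega), dif_pos h1]
        simp only [List.get_eq_getElem]
        rw [List.getElem_append_left h1]
      · rw [dif_neg h1]
        by_cases h2 : n < s.length + d.length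
        · rw [dif_pos (by simp; omega), dif_pos (by omega)]
          simp only [List.get_eq_getElem]
          rw [List.getElem_append_right (by omega)]
        · rw [dif_neg (by simp; omega), dif_neg (by omega)]
          congr 1
          simp
          omega

lemma Trace.prefix_of_cat_eq_fin {Act : Type} {r s : List Act} {v : Trace Act}
    (hv : Trace.cat r v = Trace.fin s) : r <+: s := by
  cases v with
  | fin l =>
      simp only [Trace.cat, Trace.fin.injEq] at hv
      exact ⟨l, hv⟩
  | inf f => simp [Trace.cat] at hv

theorem cosafety_is_extension_closure_of_min {Act : Type} (P : Set (Trace Act))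
    (h : ∀ u, u ∈ P → ∃ t : List Act, (∃ v, Trace.cat t v = u) ∧ PosDet P t) :
    P = {u : Trace Act | ∃ t : List Act,
          (Trace.fin t ∈ P ∧ ∀ t' : List Act, t' <+: t → Trace.fin t' ∈ P → t' = t) ∧
          ∃ v, Trace.cat t v = u} := by
  ext u
  constructor
  · intro hu
    obtain ⟨t, ⟨v, hv⟩, hpos⟩ := h u hu
    -- t is a list prefix of u with PosDet; find the minimal prefix of t in P
    have hex : ∃ n, Trace.fin (t.take n) ∈ P := by
      refine ⟨t.length, ?_⟩
      simpa [Trace.cat_nil] using hpos (Trace.fin [])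
    classical
    set n₀ := Nat.find hex with hn₀
    have hmemP : Trace.fin (t.take n₀) ∈ P := Nat.find_spec hex
    have hn₀le : n₀ ≤ t.length := by
      exact Nat.find_min' hex (by simpa [Trace.cat_nil] using hpos (Trace.fin []))
    refine ⟨t.take n₀, ⟨hmemP, ?_⟩, ?_⟩
    · intro t' ht' hmem
      have ht'take : t' = (t.take n₀).take t'.length := (List.prefix_iff_eq_take.mp ht')
      have ht'len : t'.length ≤ n₀ := by
        have := ht'.length_le
        simpa [List.length_take, Nat.min_eq_left hn₀le] using this
      have : Trace.fin (t.take t'.length) ∈ P := by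
        rw [ht'take, List.take_take, Nat.min_eq_left ht'len] at hmem
        exact hmem
      have hge : n₀ ≤ t'.length := Nat.find_min' hex this
      have : t'.length = n₀ := le_antisymm ht'len hge
      rw [ht'take, this, List.take_take, Nat.min_self]
    · refine ⟨Trace.cat (t.drop n₀) v, ?_⟩
      rw [← Trace.cat_assoc, List.take_append_drop, hv]
  · rintro ⟨t, ⟨htP, hmin⟩, v, hv⟩
    obtain ⟨r, ⟨w, hw⟩, hrpos⟩ := h (Trace.fin t) htP
    have hrt : r <+: t := Trace.prefix_of_cat_eq_fin hw
    have hrP : Trace.fin r ∈ P := by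
      simpa [Trace.cat_nil] using hrpos (Trace.fin [])
    have : r = t := hmin r hrt hrP
    subst this
    rw [← hv]
    exact hrpos v
end
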